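/- Let X be a metric space, λ ∈ ℝ, L ≥ 0, and let Ω ⊆ X be an open set. Let q₁, …, q_N ∈ X and r₁, …, r_N > 0 be such that Ω ⊆ ⋃_{i=1}^N B_{r_i/10}(q_i). Let f : ⋃_{i=1}^N B_{r_i}(q_i) → ℝ be a function, and for each 1 ≤ i ≤ N let F_i : B_{r_i}(q_i) → ℝ be λ-concave and L-Lipschitz on B_{r_i}(q_i), with F_i(x) ≥ f(x) for all x ∈ B_{r_i}(q_i) ∖ B_{(2/3)·r_i}(q_i) and F_i(x) ≤ f(x) for all x ∈ B_{r_i/10}(q_i). Define F : Ω → ℝ by F(x) = min{ F_i(x) : 1 ≤ i ≤ N, x ∈ B_{r_i}(q_i) }. Then for every y ∈ Ω there exists r_y > 0 with B_{r_y}(y) ⊆ Ω such that, with I_y = { i : y ∈ B_{r_i}(q_i) }, one has F(x) = min_{i ∈ I_y} F_i(x) for all x ∈ B_{r_y}(y); consequently F is λ-concave on Ω and every point of Ω has a neighborhood on which F is L-Lipschitz. -/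
import Mathlib


/-- A unit-speed geodesic (on `[a,b]`) in a metric space. -/
def IsUnitSpeedGeodesic {X : Type*} [MetricSpace X] (γ : ℝ → X) (a b : ℝ) : Prop :=
  ∀ s ∈ Set.Icc a b, ∀ t ∈ Set.Icc a b, dist (γ s) (γ t) = |s - t|

/-- `f` is `λ`-concave on `Ω`: along every unit-speed geodesic with image in `Ω`,
`t ↦ f (γ t) - (λ/2) t²` is concave. -/
def LambdaConcaveOn {X : Type*} [MetricSpace X] (lam : ℝ) (f : X → ℝ) (Ω : Set X) : Prop :=
  ∀ (γ : ℝ → X) (a b : ℝ), a ≤ b → IsUnitSpeedGeodesic γ a b →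
    (∀ t ∈ Set.Icc a b, γ t ∈ Ω) →
    ConcaveOn ℝ (Set.Icc a b) (fun t => f (γ t) - lam / 2 * t ^ 2)

/-- A finite minimum of concave functions is concave. -/
lemma concaveOn_finset_inf' {ι : Type*} (T : Finset ι) (hT : T.Nonempty)
    (s : Set ℝ) (hs : Convex ℝ s) (u : ι → ℝ → ℝ)
    (hu : ∀ i ∈ T, ConcaveOn ℝ s (u i)) :
    ConcaveOn ℝ s (fun x => T.inf' hT fun i => u i x) := by
  refine ⟨hs, ?_⟩
  intro x hx y hy p q hp hq hpq
  obtain ⟨i, hiT, hi⟩ := T.exists_mem_eq_inf' hT (fun i => u i (p • x + q • y))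
  dsimp only
  rw [hi]
  calc p • (T.inf' hT fun j => u j x) + q • (T.inf' hT fun j => u j y)
      ≤ p • u i x + q • u i y := by
        gcongr
        · exact Finset.inf'_le _ hiT
        · exact Finset.inf'_le _ hiT
    _ ≤ u i (p • x + q • y) := (hu i hiT).2 hx hy hp hq hpq

/-- Congruence for concavity. -/
lemma concaveOn_congr_of_eqOn {s : Set ℝ} {f g : ℝ → ℝ} (h : ConcaveOn ℝ s f)
    (he : Set.EqOn f g s) : ConcaveOn ℝ s g := by
  refine ⟨h.1, ?_⟩
  intro x hx y hy p q hp hq hpq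
  rw [← he hx, ← he hy, ← he (h.1 hx hy hp hq hpq)]
  exact h.2 hx hy hp hq hpq

/-- A continuous function on `[a,b]` that is locally concave is concave. -/
lemma concaveOn_of_local (g : ℝ → ℝ) (a b : ℝ)
    (hcont : ContinuousOn g (Set.Icc a b))
    (hloc : ∀ t ∈ Set.Icc a b, ∃ δ > (0:ℝ),
      ConcaveOn ℝ (Set.Icc a b ∩ Set.Icc (t - δ) (t + δ)) g) :
    ConcaveOn ℝ (Set.Icc a b) g := by
  have H : ∀ x ∈ Set.Icc a b, ∀ y ∈ Set.Icc a b, x < y → ∀ t ∈ Set.Icc x y,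
      (y - t) * g x + (t - x) * g y ≤ (y - x) * g t := by
    intro x hx y hy hxy
    by_contra hcon
    push_neg at hcon
    obtain ⟨t₀, ht₀, ht₀'⟩ := hcon
    set h : ℝ → ℝ := fun t => (y - x) * g t - ((y - t) * g x + (t - x) * g y) with hh
    have hxy' : Set.Icc x y ⊆ Set.Icc a b := Set.Icc_subset_Icc hx.1 hy.2
    have hconth : ContinuousOn h (Set.Icc x y) := by
      have h1 : ContinuousOn g (Set.Icc x y) := hcont.mono hxy'
      rw [hh]
      fun_prop
    obtain ⟨m₀, hm₀, hmin⟩ := isCompact_Icc.exists_isMinOn ⟨t₀, ht₀⟩ hconth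
    have hv : h m₀ < 0 := by
      refine lt_of_le_of_lt (hmin ht₀) ?_
      simp only [hh]
      linarith
    set S := Set.Icc x y ∩ h ⁻¹' {h m₀} with hS
    have hScl : IsClosed S := hconth.preimage_isClosed_of_isClosed isClosed_Icc isClosed_singleton
    have hSne : S.Nonempty := ⟨m₀, hm₀, rfl⟩
    have hSbdd : BddAbove S := bddAbove_Icc.mono Set.inter_subset_left
    set m := sSup S with hm
    have hmS : m ∈ S := hScl.csSup_mem hSne hSbdd
    have hmIcc : m ∈ Set.Icc x y := hmS.1
    have hmv : h m = h m₀ := hmS.2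
    have hhx : h x = 0 := by simp only [hh]; ring
    have hhy : h y = 0 := by simp only [hh]; ring
    have hmx : x < m := by
      rcases eq_or_lt_of_le hmIcc.1 with h' | h'
      · exfalso; rw [← h', hhx] at hmv; linarith [hmv ▸ hv]
      · exact h'
    have hmy : m < y := by
      rcases eq_or_lt_of_le hmIcc.2 with h' | h'
      · exfalso; rw [h', hhy] at hmv; linarith [hmv ▸ hv]
      · exact h'
    obtain ⟨δ, hδ, hcv⟩ := hloc m (hxy' hmIcc)
    set ε := min δ (min (m - x) (y - m)) / 2 with hε
    have hε0 : 0 < ε := by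
      have : 0 < min δ (min (m - x) (y - m)) :=
        lt_min hδ (lt_min (by linarith) (by linarith))
      linarith
    have hε1 : ε ≤ δ / 2 := by
      have := min_le_left δ (min (m - x) (y - m)); simp only [hε]; linarith
    have hε2 : ε ≤ (m - x) / 2 := by
      have h1 := min_le_right δ (min (m - x) (y - m))
      have h2 := min_le_left (m - x) (y - m)
      simp only [hε]; linarith
    have hε3 : ε ≤ (y - m) / 2 := by
      have h1 := min_le_right δ (min (m - x) (y - m))
      have h2 := min_le_right (m - x) (y - m)
      simp only [hε]; linarith
    have hm1 : m - ε ∈ Set.Icc x y := ⟨by linarith, by linarith⟩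
    have hm2 : m + ε ∈ Set.Icc x y := ⟨by linarith, by linarith⟩
    have h₁ : m - ε ∈ Set.Icc a b ∩ Set.Icc (m - δ) (m + δ) :=
      ⟨hxy' hm1, by constructor <;> [linarith; linarith]⟩
    have h₂ : m + ε ∈ Set.Icc a b ∩ Set.Icc (m - δ) (m + δ) :=
      ⟨hxy' hm2, by constructor <;> [linarith; linarith]⟩
    have hmid := hcv.2 h₁ h₂ (by norm_num : (0:ℝ) ≤ 1/2) (by norm_num : (0:ℝ) ≤ 1/2)
      (by norm_num)
    have hmm : (1/2 : ℝ) • (m - ε) + (1/2 : ℝ) • (m + ε) = m := by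
      simp only [smul_eq_mul]; ring
    rw [hmm] at hmid
    simp only [smul_eq_mul] at hmid
    have hle1 : h m₀ ≤ h (m - ε) := hmin hm1
    have hlt2 : h m₀ < h (m + ε) := by
      have h2' : h m₀ ≤ h (m + ε) := hmin hm2
      rcases eq_or_lt_of_le h2' with h' | h'
      · exfalso
        have : m + ε ∈ S := ⟨hm2, h'.symm⟩
        have := le_csSup hSbdd this
        linarith
      · exact h'
    -- contradiction
    clear_value ε m S h
    have hwu : 0 < y - x := by linarith
    have hkey : h m ≥ 1/2 * h (m - ε) + 1/2 * h (m + ε) := by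
      simp only [hh]
      nlinarith [hmid, hwu]
    rw [hmv] at hkey
    linarith
  refine ⟨convex_Icc a b, ?_⟩
  intro u hu w hw p q hp hq hpq
  simp only [smul_eq_mul]
  rcases lt_trichotomy u w with hlt | heq | hgt
  · have hq' : 0 ≤ q * (w - u) := mul_nonneg hq (by linarith)
    have hp' : 0 ≤ p * (w - u) := mul_nonneg hp (by linarith)
    have e1 : p * u + q * w - u = q * (w - u) := by linear_combination u * hpq
    have e2 : w - (p * u + q * w) = p * (w - u) := by linear_combination (-w) * hpq
    have ht : p * u + q * w ∈ Set.Icc u w := ⟨by linarith, by linarith⟩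
    have hc := H u hu w hw hlt _ ht
    have hwu : 0 < w - u := by linarith
    have heq1 : (w - (p * u + q * w)) * g u + ((p * u + q * w) - u) * g w
        = (w - u) * (p * g u + q * g w) := by
      linear_combination (u * g w - w * g u) * hpq
    rw [heq1] at hc
    exact le_of_mul_le_mul_left hc hwu
  · have : p * u + q * w = u := by rw [← heq]; linear_combination u * hpq
    rw [this, ← heq]
    linear_combination (g u) * hpq
  · have hq' : 0 ≤ q * (u - w) := mul_nonneg hq (by linarith)
    have hp' : 0 ≤ p * (u - w) := mul_nonneg hp (by linarith)
    have e1 : p * u + q * w - w = p * (u - w) := by linear_combination w * hpq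
    have e2 : u - (p * u + q * w) = q * (u - w) := by linear_combination (-u) * hpq
    have ht : p * u + q * w ∈ Set.Icc w u := ⟨by linarith, by linarith⟩
    have hc := H w hw u hu hgt _ ht
    have hwu : 0 < u - w := by linarith
    have heq1 : (u - (p * u + q * w)) * g w + ((p * u + q * w) - w) * g u
        = (u - w) * (p * g u + q * g w) := by
      linear_combination (w * g u - u * g w) * hpq
    rw [heq1] at hc
    exact le_of_mul_le_mul_left hc hwu

/-- Local minimum of compatible locally defined concave functions: the pointwise
minimum `F(x) = min {Fᵢ(x) : x ∈ B_{rᵢ}(qᵢ)}` is locally a minimum of globally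
defined functions, hence `λ`-concave and locally `L`-Lipschitz on `Ω`. -/
theorem min_of_local_functions {X : Type*} [MetricSpace X] (lam L : ℝ) (hL : 0 ≤ L)
    (Ω : Set X) (hΩ : IsOpen Ω) (N : ℕ) (q : Fin N → X) (r : Fin N → ℝ)
    (hr : ∀ i, 0 < r i)
    (hcover : Ω ⊆ ⋃ i, Metric.ball (q i) (r i / 10))
    (f : X → ℝ) (Fi : Fin N → X → ℝ)
    (hconc : ∀ i, LambdaConcaveOn lam (Fi i) (Metric.ball (q i) (r i)))
    (hlip : ∀ i, ∀ x ∈ Metric.ball (q i) (r i), ∀ y ∈ Metric.ball (q i) (r i),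
      |Fi i x - Fi i y| ≤ L * dist x y)
    (hge : ∀ i, ∀ x ∈ Metric.ball (q i) (r i) \ Metric.ball (q i) (2 / 3 * r i),
      Fi i x ≥ f x)
    (hle : ∀ i, ∀ x ∈ Metric.ball (q i) (r i / 10), Fi i x ≤ f x)
    (F : X → ℝ)
    (hF : ∀ x ∈ Ω,
      IsLeast {z | ∃ i, x ∈ Metric.ball (q i) (r i) ∧ z = Fi i x} (F x)) :
    (∀ y ∈ Ω, ∃ ry > (0 : ℝ), Metric.ball y ry ⊆ Ω ∧
      ∀ x ∈ Metric.ball y ry,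
        IsLeast {z | ∃ i, y ∈ Metric.ball (q i) (r i) ∧ z = Fi i x} (F x)) ∧
    LambdaConcaveOn lam F Ω ∧
    (∀ y ∈ Ω, ∃ ρ > (0 : ℝ), ∀ x₁ ∈ Metric.ball y ρ ∩ Ω, ∀ x₂ ∈ Metric.ball y ρ ∩ Ω,
      |F x₁ - F x₂| ≤ L * dist x₁ x₂) := by
  classical
  -- the key local structure result
  have key : ∀ y ∈ Ω, ∃ ry > (0:ℝ), Metric.ball y ry ⊆ Ω ∧
      (∀ i, y ∈ Metric.ball (q i) (r i) → Metric.ball y ry ⊆ Metric.ball (q i) (r i)) ∧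
      (∀ x ∈ Metric.ball y ry,
        IsLeast {z | ∃ i, y ∈ Metric.ball (q i) (r i) ∧ z = Fi i x} (F x)) ∧
      (∀ x₁ ∈ Metric.ball y ry, ∀ x₂ ∈ Metric.ball y ry,
        |F x₁ - F x₂| ≤ L * dist x₁ x₂) := by
    intro y hy
    obtain ⟨εΩ, hεΩ0, hεΩ⟩ := Metric.isOpen_iff.1 hΩ y hy
    obtain ⟨j₀, hj₀⟩ := Set.mem_iUnion.1 (hcover hy)
    have hNe : (Finset.univ : Finset (Fin N)).Nonempty := ⟨j₀, Finset.mem_univ _⟩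
    set ρ₀ := Finset.univ.inf' hNe (fun i => if y ∈ Metric.ball (q i) (r i) then
      min (r i / 3) (r i - dist y (q i)) else r i / 3) with hρ₀
    have hρ₀pos : 0 < ρ₀ := by
      rw [hρ₀, Finset.lt_inf'_iff]
      intro i _
      split_ifs with h
      · refine lt_min (by linarith [hr i]) ?_
        rw [Metric.mem_ball] at h
        linarith
      · linarith [hr i]
    set ry := min εΩ ρ₀ with hry
    have hrypos : 0 < ry := lt_min hεΩ0 hρ₀pos
    have hryρ : ry ≤ ρ₀ := min_le_right _ _
    have hball : ∀ i, y ∈ Metric.ball (q i) (r i) →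
        Metric.ball y ry ⊆ Metric.ball (q i) (r i) := by
      intro i hi x hx
      have h1 : ρ₀ ≤ r i - dist y (q i) := by
        refine le_trans (Finset.inf'_le _ (Finset.mem_univ i)) ?_
        rw [if_pos hi]
        exact min_le_right _ _
      rw [Metric.mem_ball] at hx ⊢
      calc dist x (q i) ≤ dist x y + dist y (q i) := dist_triangle _ _ _
        _ < ry + dist y (q i) := by linarith
        _ ≤ r i := by linarith
    have hry3 : ∀ i, ry ≤ r i / 3 := by
      intro i
      refine hryρ.trans (le_trans (Finset.inf'_le _ (Finset.mem_univ i)) ?_)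
      split_ifs with h
      · exact min_le_left _ _
      · exact le_refl _
    have hsubΩ : Metric.ball y ry ⊆ Ω :=
      (Metric.ball_subset_ball (min_le_left _ _)).trans hεΩ
    have hmain : ∀ x ∈ Metric.ball y ry,
        IsLeast {z | ∃ i, y ∈ Metric.ball (q i) (r i) ∧ z = Fi i x} (F x) := by
      intro x hx
      have hxΩ : x ∈ Ω := hsubΩ hx
      obtain ⟨⟨i₀, hxi₀, hFx⟩, hlb⟩ := hF x hxΩ
      have hlb' : ∀ i, y ∈ Metric.ball (q i) (r i) → F x ≤ Fi i x :=
        fun i hi => hlb ⟨i, hball i hi hx, rfl⟩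
      constructor
      · obtain ⟨j, hj⟩ := Set.mem_iUnion.1 (hcover hxΩ)
        have hdxy : dist x y < ry := Metric.mem_ball.1 hx
        have hdxj : dist x (q j) < r j / 10 := Metric.mem_ball.1 hj
        have hyj : y ∈ Metric.ball (q j) (r j) := by
          rw [Metric.mem_ball]
          have := dist_triangle y x (q j)
          rw [dist_comm y x] at this
          have h3 := hry3 j
          have := hr j
          linarith
        by_cases hi₀y : y ∈ Metric.ball (q i₀) (r i₀)
        · exact ⟨i₀, hi₀y, hFx⟩
        · have hxfar : x ∉ Metric.ball (q i₀) (2 / 3 * r i₀) := by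
            rw [Metric.mem_ball, not_lt] at hi₀y ⊢
            have := dist_triangle y x (q i₀)
            rw [dist_comm y x] at this
            have h3 := hry3 i₀
            linarith
          have h2 : Fi i₀ x ≥ f x := hge i₀ x ⟨hxi₀, hxfar⟩
          have h3 : Fi j x ≤ f x := hle j x hj
          have h4 : F x ≤ Fi j x := hlb ⟨j, Metric.ball_subset_ball
            (by linarith [hr j] : r j / 10 ≤ r j) hj, rfl⟩
          refine ⟨j, hyj, ?_⟩
          have : Fi j x ≤ F x := by rw [hFx]; linarith
          linarith
      · rintro z ⟨i, hi, rfl⟩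
        exact hlb' i hi
    have hlip' : ∀ x₁ ∈ Metric.ball y ry, ∀ x₂ ∈ Metric.ball y ry,
        |F x₁ - F x₂| ≤ L * dist x₁ x₂ := by
      intro x₁ h₁ x₂ h₂
      obtain ⟨⟨j₂, hj₂y, hj₂⟩, _⟩ := hmain x₂ h₂
      obtain ⟨⟨j₁, hj₁y, hj₁⟩, _⟩ := hmain x₁ h₁
      have e1 : F x₁ ≤ Fi j₂ x₁ := (hmain x₁ h₁).2 ⟨j₂, hj₂y, rfl⟩
      have e2 : F x₂ ≤ Fi j₁ x₂ := (hmain x₂ h₂).2 ⟨j₁, hj₁y, rfl⟩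
      have b1 : |Fi j₂ x₁ - Fi j₂ x₂| ≤ L * dist x₁ x₂ :=
        hlip j₂ x₁ (hball j₂ hj₂y h₁) x₂ (hball j₂ hj₂y h₂)
      have b2 : |Fi j₁ x₁ - Fi j₁ x₂| ≤ L * dist x₁ x₂ :=
        hlip j₁ x₁ (hball j₁ hj₁y h₁) x₂ (hball j₁ hj₁y h₂)
      rw [abs_le] at b1 b2 ⊢
      constructor
      · -- -(L * dist) ≤ F x₁ - F x₂
        have : -(Fi j₁ x₁ - Fi j₁ x₂) ≤ L * dist x₁ x₂ := by linarith [b2.1]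
        linarith [b2.1, e2, hj₁ ▸ le_refl (F x₁)]
      · linarith [b1.2, e1]
    exact ⟨ry, hrypos, hsubΩ, hball, hmain, hlip'⟩
  refine ⟨?_, ?_, ?_⟩
  · intro y hy
    obtain ⟨ry, h0, h1, _, h2, _⟩ := key y hy
    exact ⟨ry, h0, h1, h2⟩
  · -- concavity
    intro γ a b hab hgeo himg
    apply concaveOn_of_local
    · -- continuity
      intro t ht
      have hyt : γ t ∈ Ω := himg t ht
      obtain ⟨ry, hry0, hryΩ, hball, hleast, hlip'⟩ := key (γ t) hyt
      apply ContinuousWithinAt.sub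
      · rw [Metric.continuousWithinAt_iff]
        intro ε hε
        refine ⟨min ry (ε / (L + 1)), lt_min hry0 (by positivity), ?_⟩
        intro s hs hdist
        have hst : dist (γ s) (γ t) = |s - t| := hgeo s hs t ht
        have hd : |s - t| < min ry (ε / (L + 1)) := by
          rw [← Real.dist_eq]; exact hdist
        have hγs : γ s ∈ Metric.ball (γ t) ry := by
          rw [Metric.mem_ball, hst]
          exact hd.trans_le (min_le_left _ _)
        have hγt : γ t ∈ Metric.ball (γ t) ry := Metric.mem_ball_self hry0
        have := hlip' (γ s) hγs (γ t) hγt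
        rw [Real.dist_eq]
        calc |F (γ s) - F (γ t)| ≤ L * dist (γ s) (γ t) := this
          _ = L * |s - t| := by rw [hst]
          _ ≤ L * (ε / (L + 1)) := by
              refine mul_le_mul_of_nonneg_left ?_ hL
              exact le_of_lt (hd.trans_le (min_le_right _ _))
          _ < ε := by
              rw [mul_div_assoc', div_lt_iff₀ (by linarith : (0:ℝ) < L + 1)]
              nlinarith
      · exact (continuous_const.mul (continuous_pow 2)).continuousWithinAt
    · -- local concavity
      intro t ht
      have hyt : γ t ∈ Ω := himg t ht
      obtain ⟨ry, hry0, hryΩ, hball, hleast, hlip'⟩ := key (γ t) hyt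
      refine ⟨ry / 2, by linarith, ?_⟩
      set J := Set.Icc a b ∩ Set.Icc (t - ry / 2) (t + ry / 2) with hJ
      have hJconv : Convex ℝ J := (convex_Icc a b).inter (convex_Icc _ _)
      have hγJ : ∀ s ∈ J, γ s ∈ Metric.ball (γ t) ry := by
        intro s hs
        rw [Metric.mem_ball, hgeo s hs.1 t ht, abs_sub_lt_iff]
        obtain ⟨_, hs2⟩ := hs
        constructor <;> [linarith [hs2.2]; linarith [hs2.1]]
      set T : Finset (Fin N) :=
        Finset.univ.filter (fun i => γ t ∈ Metric.ball (q i) (r i)) with hT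
      have hTne : T.Nonempty := by
        obtain ⟨j, hj⟩ := Set.mem_iUnion.1 (hcover hyt)
        refine ⟨j, Finset.mem_filter.2 ⟨Finset.mem_univ _, ?_⟩⟩
        exact Metric.ball_subset_ball (by linarith [hr j] : r j / 10 ≤ r j) hj
      have hrep : Set.EqOn (fun s => T.inf' hTne fun i => Fi i (γ s) - lam / 2 * s ^ 2)
          (fun s => F (γ s) - lam / 2 * s ^ 2) J := by
        intro s hs
        have hmem := hleast (γ s) (hγJ s hs)
        obtain ⟨⟨i, hiy, hieq⟩, hlb⟩ := hmem
        apply le_antisymm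
        · have hiT : i ∈ T := Finset.mem_filter.2 ⟨Finset.mem_univ _, hiy⟩
          have := Finset.inf'_le (fun i => Fi i (γ s) - lam / 2 * s ^ 2) hiT
          simp only
          rw [hieq]
          exact this
        · simp only
          rw [Finset.le_inf'_iff]
          intro i' hi'
          have hi'y : γ t ∈ Metric.ball (q i') (r i') := (Finset.mem_filter.1 hi').2
          have := hlb ⟨i', hi'y, rfl⟩
          linarith
      refine concaveOn_congr_of_eqOn ?_ hrep
      apply concaveOn_finset_inf' T hTne J hJconv
      intro i hiT
      have hiy : γ t ∈ Metric.ball (q i) (r i) := (Finset.mem_filter.1 hiT).2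
      set a' := max a (t - ry / 2) with ha'
      set b' := min b (t + ry / 2) with hb'
      have hJ' : J = Set.Icc a' b' := Set.Icc_inter_Icc
      have ht' : t ∈ J := ⟨ht, by constructor <;> linarith⟩
      have ha'b' : a' ≤ b' := by
        rw [hJ'] at ht'; exact le_trans ht'.1 ht'.2
      have hsub : Set.Icc a' b' ⊆ Set.Icc a b :=
        Set.Icc_subset_Icc (le_max_left _ _) (min_le_left _ _)
      have hgeo' : IsUnitSpeedGeodesic γ a' b' :=
        fun s hs s' hs' => hgeo s (hsub hs) s' (hsub hs')
      have himg' : ∀ s ∈ Set.Icc a' b', γ s ∈ Metric.ball (q i) (r i) := by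
        intro s hs
        exact hball i hiy (hγJ s (hJ' ▸ hs))
      have := hconc i γ a' b' ha'b' hgeo' himg'
      rw [hJ']
      exact this
  · intro y hy
    obtain ⟨ry, h0, _, _, _, h3⟩ := key y hy
    exact ⟨ry, h0, fun x₁ hx₁ x₂ hx₂ => h3 x₁ hx₁.1 x₂ hx₂.1⟩
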